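/- arXiv:2509.24141 — 2 statements merged into one kernel-verified Lean document; each statement's English description precedes it below -/
import Mathlib

section
/- Fix an integer g ≥ 2, set L = cos(π/(g+1)), and for c > 0 let s(c) = 2·arsinh(L/sinh(c/2)). Then for every c > 0 one has ℓ_α(c,c) > ℓ_β(c,c); that is, at twist parameter t = c the curve α is strictly longer than β. -/
/-- Inverse hyperbolic cosine (for `x ≥ 1`). -/
noncomputable def arcosh (x : ℝ) : ℝ := Real.log (x + Real.sqrt (x ^ 2 - 1))

/-- The seam length `s(c) = 2·arsinh(L / sinh(c/2))`, so that
`sinh(c/2)·sinh(s(c)/2) = L`. -/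
noncomputable def seam (L c : ℝ) : ℝ := 2 * Real.arsinh (L / Real.sinh (c / 2))

/-- The length `ℓ_α(c,t) = 4·arcosh(cosh(s(c)/2)·cosh(t/2))`. -/
noncomputable def ellAlpha (L c t : ℝ) : ℝ :=
  4 * arcosh (Real.cosh (seam L c / 2) * Real.cosh (t / 2))

/-- The length
`ℓ_β(c,t) = 2·arcosh(cosh(s(c))·cosh(t/2)·cosh(c−t/2) − sinh(t/2)·sinh(c−t/2))`. -/
noncomputable def ellBeta (L c t : ℝ) : ℝ :=
  2 * arcosh (Real.cosh (seam L c) * Real.cosh (t / 2) * Real.cosh (c - t / 2)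
      - Real.sinh (t / 2) * Real.sinh (c - t / 2))

/-! Put `u = s(c)/2` and `v = c/2`. By the double-angle formula
`cosh (ℓ_α(c,c)/2) = 2 cosh² u cosh² v - 1`, while
`cosh (ℓ_β(c,c)/2) = cosh 2u · cosh² v - sinh² v = 2 cosh² u cosh² v - 1 - 2 sinh² v`,
which is smaller because `v ≠ 0`; and `arcosh` is strictly increasing. -/

theorem arcosh_eq_realArcosh : arcosh = Real.arcosh := rfl

namespace Real

theorem two_mul_arcosh {x : ℝ} (hx : 1 ≤ x) : 2 * arcosh x = arcosh (2 * x ^ 2 - 1) := by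
  have h : 0 ≤ 2 * arcosh x := by linarith [arcosh_nonneg hx]
  rw [← arcosh_cosh h, cosh_two_mul, sinh_sq, cosh_arcosh hx]
  ring_nf

theorem one_le_cosh_mul_cosh_sq_sub_sinh_sq (s v : ℝ) :
    1 ≤ cosh s * cosh v ^ 2 - sinh v ^ 2 := by
  nlinarith [cosh_sq_sub_sinh_sq v, one_le_cosh s, sq_nonneg (cosh v)]

theorem cosh_mul_cosh_sq_sub_sinh_sq_lt (s : ℝ) {v : ℝ} (hv : v ≠ 0) :
    cosh s * cosh v ^ 2 - sinh v ^ 2 < 2 * (cosh (s / 2) * cosh v) ^ 2 - 1 := by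
  have hs : cosh s = 2 * cosh (s / 2) ^ 2 - 1 := by
    rw [← mul_div_cancel₀ s two_ne_zero, cosh_two_mul, sinh_sq]
    ring_nf
  have hsinh : 0 < sinh v ^ 2 := sq_pos_of_ne_zero (sinh_ne_zero.2 hv)
  nlinarith [cosh_sq v]

end Real

theorem ellAlpha_eq_two_mul_arcosh (L c t : ℝ) :
    ellAlpha L c t =
      2 * Real.arcosh (2 * (Real.cosh (seam L c / 2) * Real.cosh (t / 2)) ^ 2 - 1) := by
  have hx : 1 ≤ Real.cosh (seam L c / 2) * Real.cosh (t / 2) :=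
    one_le_mul_of_one_le_of_one_le (Real.one_le_cosh _) (Real.one_le_cosh _)
  rw [ellAlpha, arcosh_eq_realArcosh, ← Real.two_mul_arcosh hx]
  ring

theorem ellBeta_self (L c : ℝ) :
    ellBeta L c c =
      2 * Real.arcosh (Real.cosh (seam L c) * Real.cosh (c / 2) ^ 2 - Real.sinh (c / 2) ^ 2) := by
  rw [ellBeta, sub_half, arcosh_eq_realArcosh, mul_assoc, ← sq, ← sq]

theorem alpha_longer_at_t_eq_c_general (L : ℝ) :
    ∀ c : ℝ, 0 < c → ellAlpha L c c > ellBeta L c c := by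
  intro c hc
  have hβ := Real.one_le_cosh_mul_cosh_sq_sub_sinh_sq (seam L c) (c / 2)
  have key := Real.cosh_mul_cosh_sq_sub_sinh_sq_lt (seam L c) (half_pos hc).ne'
  rw [ellAlpha_eq_two_mul_arcosh, ellBeta_self, gt_iff_lt, mul_lt_mul_iff_right₀ two_pos,
    Real.arcosh_lt_arcosh (by linarith) (by linarith)]
  exact key

/-- Fix an integer `g ≥ 2`, set `L = cos(π/(g+1))`, and for `c > 0` let
`s(c) = 2·arsinh(L/sinh(c/2))`. Then for every `c > 0` one has
`ℓ_α(c,c) > ℓ_β(c,c)`; that is, at twist parameter `t = c` the curve `α` is strictly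
longer than `β`. -/
theorem alpha_longer_at_t_eq_c (g : ℕ) (hg : 2 ≤ g) (L : ℝ)
    (hL : L = Real.cos (Real.pi / (g + 1))) :
    ∀ c : ℝ, 0 < c → ellAlpha L c c > ellBeta L c c :=
  alpha_longer_at_t_eq_c_general L
end

section
/- Fix an integer g ≥ 2, set L = cos(π/(g+1)), for c > 0 let s(c) = 2·arsinh(L/sinh(c/2)), and let c₁ > 0 be the unique solution of cosh(c₁) = 2L² + cosh(s(c₁)). Then for all c with 0 < c < c₁ and all t with 0 ≤ t ≤ c, one has ℓ_β(c,t) > 2c; in particular the equation ℓ_β(c,t) = ℓ_γ(c,t) has no solution with 0 < c < c₁ and 0 ≤ t ≤ c. -/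
open Real

noncomputable def coshHalfEllBeta (L c t : ℝ) : ℝ :=
  cosh (seam L c) * cosh (t / 2) * cosh (c - t / 2) - sinh (t / 2) * sinh (c - t / 2)

-- `arcosh` above is definitionally Mathlib's `Real.arcosh`.
lemma ellBeta_eq_two_mul_arcosh (L c t : ℝ) :
    ellBeta L c t = 2 * Real.arcosh (coshHalfEllBeta L c t) := rfl

lemma cos_pi_div_pos {x : ℝ} (hx : 2 < x) : 0 < cos (π / x) := by
  apply cos_pos_of_mem_Ioo
  constructor
  · linarith [pi_pos, div_pos pi_pos (by linarith : (0 : ℝ) < x)]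
  · exact div_lt_div_of_pos_left pi_pos two_pos hx

lemma cosh_eq_two_mul_sinh_half_sq_add_one (x : ℝ) : cosh x = 2 * sinh (x / 2) ^ 2 + 1 := by
  have h := cosh_two_mul (x / 2)
  rw [mul_div_cancel₀ x two_ne_zero] at h
  rw [h, cosh_sq]
  ring

lemma sinh_half_seam (L c : ℝ) : sinh (seam L c / 2) = L / sinh (c / 2) := by
  rw [seam, mul_div_cancel_left₀ _ two_ne_zero, sinh_arsinh]

lemma seam_pos {L c : ℝ} (hL : 0 < L) (hc : 0 < c) : 0 < seam L c :=
  mul_pos two_pos (arsinh_pos_iff.mpr (div_pos hL (sinh_pos_iff.mpr (half_pos hc))))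

lemma seam_lt_seam {L c c' : ℝ} (hL : 0 < L) (hc : 0 < c) (hcc' : c < c') :
    seam L c' < seam L c := by
  have hsinh : sinh (c / 2) < sinh (c' / 2) := sinh_lt_sinh.mpr (by linarith)
  have := div_lt_div_of_pos_left hL (sinh_pos_iff.mpr (half_pos hc)) hsinh
  unfold seam
  linarith [arsinh_lt_arsinh.mpr this]

lemma cosh_seam_lt_cosh_seam {L c c' : ℝ} (hL : 0 < L) (hc : 0 < c) (hcc' : c < c') :
    cosh (seam L c') < cosh (seam L c) := by
  rw [cosh_lt_cosh, abs_of_pos (seam_pos hL (hc.trans hcc')), abs_of_pos (seam_pos hL hc)]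
  exact seam_lt_seam hL hc hcc'

lemma two_mul_sq_eq_of_seam {L c : ℝ} (hc : c ≠ 0) :
    2 * L ^ 2 = (cosh (seam L c) - 1) * (cosh c - 1) / 2 := by
  have hsinh : sinh (c / 2) ≠ 0 := by
    rw [Ne, sinh_eq_zero]
    exact div_ne_zero hc two_ne_zero
  rw [cosh_eq_two_mul_sinh_half_sq_add_one (seam L c), cosh_eq_two_mul_sinh_half_sq_add_one c,
    sinh_half_seam]
  field_simp
  ring

lemma coshHalfEllBeta_eq (L c t : ℝ) :
    coshHalfEllBeta L c t =
      ((cosh (seam L c) - 1) * cosh c + (cosh (seam L c) + 1) * cosh (c - t)) / 2 := by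
  have hc : cosh c = cosh (c - t / 2) * cosh (t / 2) + sinh (c - t / 2) * sinh (t / 2) := by
    rw [← cosh_add, sub_add_cancel]
  have hct : cosh (c - t) = cosh (c - t / 2) * cosh (t / 2) - sinh (c - t / 2) * sinh (t / 2) := by
    rw [← cosh_sub, sub_sub, add_halves]
  rw [coshHalfEllBeta, hc, hct]
  ring

lemma two_mul_sq_add_cosh_seam_le_coshHalfEllBeta {L c : ℝ} (hc : c ≠ 0) (t : ℝ) :
    2 * L ^ 2 + cosh (seam L c) ≤ coshHalfEllBeta L c t := by
  rw [coshHalfEllBeta_eq, two_mul_sq_eq_of_seam hc]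
  nlinarith [one_le_cosh (seam L c), one_le_cosh (c - t)]

lemma lt_arcosh_of_cosh_lt {x y : ℝ} (hx : 0 ≤ x) (h : cosh x < y) : x < Real.arcosh y := by
  calc x = Real.arcosh (cosh x) := (arcosh_cosh hx).symm
    _ < Real.arcosh y := (arcosh_lt_arcosh (cosh_pos x) ((cosh_pos x).trans h)).mpr h

theorem beta_gt_gamma_below_c1_general (g : ℕ) (hg : 2 ≤ g) (L : ℝ)
    (hL : L = Real.cos (Real.pi / (g + 1))) (c₁ : ℝ)
    (heq : Real.cosh c₁ = 2 * L ^ 2 + Real.cosh (seam L c₁)) :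
    ∀ c t : ℝ, 0 < c → c < c₁ → 0 ≤ t → t ≤ c →
      ellBeta L c t > 2 * c := by
  intro c t hc hcc₁ _ _
  have hL0 : 0 < L := hL ▸ cos_pi_div_pos (by exact_mod_cast Nat.lt_succ_of_le hg)
  have hcosh : cosh c < coshHalfEllBeta L c t :=
    calc cosh c < cosh c₁ := by
          rwa [cosh_lt_cosh, abs_of_pos hc, abs_of_pos (hc.trans hcc₁)]
      _ = 2 * L ^ 2 + cosh (seam L c₁) := heq
      _ < 2 * L ^ 2 + cosh (seam L c) := by gcongr; exact cosh_seam_lt_cosh_seam hL0 hc hcc₁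
      _ ≤ coshHalfEllBeta L c t := two_mul_sq_add_cosh_seam_le_coshHalfEllBeta hc.ne' t
  rw [ellBeta_eq_two_mul_arcosh]
  linarith [lt_arcosh_of_cosh_lt hc.le hcosh]

/-- Fix an integer `g ≥ 2`, set `L = cos(π/(g+1))`, for `c > 0` let
`s(c) = 2·arsinh(L/sinh(c/2))`, and let `c₁ > 0` be the unique solution of
`cosh(c₁) = 2L² + cosh(s(c₁))`. Then for all `c` with `0 < c < c₁` and all `t` with
`0 ≤ t ≤ c`, one has `ℓ_β(c,t) > 2c`; in particular the equation
`ℓ_β(c,t) = ℓ_γ(c,t)` has no solution with `0 < c < c₁` and `0 ≤ t ≤ c`. -/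
theorem beta_gt_gamma_below_c1 (g : ℕ) (hg : 2 ≤ g) (L : ℝ)
    (hL : L = Real.cos (Real.pi / (g + 1))) (c₁ : ℝ) (hc₁ : 0 < c₁)
    (heq : Real.cosh c₁ = 2 * L ^ 2 + Real.cosh (seam L c₁))
    (huniq : ∀ c : ℝ, 0 < c → Real.cosh c = 2 * L ^ 2 + Real.cosh (seam L c) → c = c₁) :
    ∀ c t : ℝ, 0 < c → c < c₁ → 0 ≤ t → t ≤ c →
      ellBeta L c t > 2 * c :=
  beta_gt_gamma_below_c1_general g hg L hL c₁ heq
end
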